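/- arXiv:2206.01666 — 2 statements merged into one kernel-verified Lean document; each statement's English description precedes it below -/
import Mathlib

section
/- Let m ≥ 1, L > 0 and B > 0, let f : ℝ^m → ℝ be differentiable with L-Lipschitz gradient on the nonnegative orthant ℝ^m_+, and let λ* ∈ ℝ^m_+ satisfy f(λ*) ≤ f(μ) for all μ ∈ ℝ^m_+. Then for every λ ∈ ℝ^m_+ with ‖λ‖₁ ≤ B, ⟨λ, ∇f(λ)⟩ ≤ B·√(2·m·L·(f(λ) − f(λ*))) + 2·(f(λ) − f(λ*)). -/
/-!
The projected gradient step `μ = [λ - ∇f(λ)/L]₊ = λ - σ`, `σᵢ = min(λᵢ, ∇ᵢf(λ)/L)`, stays in the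
orthant, and by the descent lemma together with `L σᵢ² ≤ σᵢ ∇ᵢf(λ)` it lowers `f` by at least
`⟨σ, ∇f(λ)⟩ / 2`. Since `f(λ*) ≤ f(μ)`, this gives `⟨σ, ∇f(λ)⟩ ≤ 2 (f(λ) - f(λ*))`. Coordinatewise,
either `σᵢ = λᵢ`, or `σᵢ = ∇ᵢf(λ)/L` and then `∇ᵢf(λ)² ≤ 2 L (f(λ) - f(λ*))`; in both cases
`λᵢ ∇ᵢf(λ) ≤ λᵢ √(2 L (f(λ) - f(λ*))) + σᵢ ∇ᵢf(λ)`, and summing over `i` gives the bound.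
-/

open InnerProductSpace

theorem mul_sq_min_div_le {a b L : ℝ} (ha : 0 ≤ a) (hL : 0 < L) :
    L * min a (b / L) ^ 2 ≤ min a (b / L) * b := by
  rcases le_total a (b / L) with hab | hab
  · have hLab : L * a ≤ b := (le_div_iff₀' hL).1 hab
    rw [min_eq_left hab]
    nlinarith
  · rw [min_eq_right hab]
    exact le_of_eq (by field_simp)

theorem mul_le_mul_add_min_div_mul {a b c L : ℝ} (ha : 0 ≤ a) (hL : 0 < L) (hc : 0 ≤ c)
    (hbc : L * (min a (b / L) * b) ≤ c ^ 2) :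
    a * b ≤ a * c + min a (b / L) * b := by
  rcases le_total a (b / L) with hab | hab
  · rw [min_eq_left hab]
    linarith [mul_nonneg ha hc]
  · have hb2 : L * (b / L * b) = b ^ 2 := by field_simp
    rw [min_eq_right hab, hb2] at hbc
    have hb : b ≤ c := (abs_le_of_sq_le_sq' hbc hc).2
    have hsq : 0 ≤ b / L * b := (mul_nonneg_iff_of_pos_left hL).1 (hb2 ▸ sq_nonneg b)
    rw [min_eq_right hab]
    linarith [mul_le_mul_of_nonneg_left hb ha]

section Descent

variable {F : Type*} [NormedAddCommGroup F] [InnerProductSpace ℝ F] [CompleteSpace F]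
  {f : F → ℝ}

theorem HasGradientAt.hasDerivAt_comp_add_smul {g x d : F} {t : ℝ}
    (h : HasGradientAt f g (x + t • d)) :
    HasDerivAt (fun t : ℝ => f (x + t • d)) ⟪g, d⟫_ℝ t := by
  have hline : HasDerivAt (fun t : ℝ => x + t • d) d t := by
    simpa using ((hasDerivAt_id t).smul_const d).const_add x
  simpa [toDual_apply_apply, Function.comp_def] using h.hasFDerivAt.comp_hasDerivAt t hline

theorem Convex.le_add_inner_gradient_add_sq {s : Set F} (hs : Convex ℝ s)
    (hf : Differentiable ℝ f) {L : ℝ}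
    (hlip : ∀ x ∈ s, ∀ y ∈ s, ‖gradient f x - gradient f y‖ ≤ L * ‖x - y‖)
    {x y : F} (hx : x ∈ s) (hy : y ∈ s) :
    f y ≤ f x + ⟪gradient f x, y - x⟫_ℝ + L / 2 * ‖y - x‖ ^ 2 := by
  set d := y - x
  let φ : ℝ → ℝ := fun t => f (x + t • d) - t * ⟪gradient f x, d⟫_ℝ - L / 2 * t ^ 2 * ‖d‖ ^ 2
  have hφ' : ∀ t, HasDerivAt φ
      (⟪gradient f (x + t • d) - gradient f x, d⟫_ℝ - L * t * ‖d‖ ^ 2) t := by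
    intro t
    refine ((((hf _).hasGradientAt.hasDerivAt_comp_add_smul).sub
      ((hasDerivAt_id t).mul_const ⟪gradient f x, d⟫_ℝ)).sub
      (((hasDerivAt_pow 2 t).const_mul (L / 2)).mul_const (‖d‖ ^ 2))).congr_deriv ?_
    rw [inner_sub_left]
    ring
  have hφ'_nonpos : ∀ t ∈ Set.Ioo (0 : ℝ) 1,
      ⟪gradient f (x + t • d) - gradient f x, d⟫_ℝ - L * t * ‖d‖ ^ 2 ≤ 0 := by
    intro t ht
    have hmem : x + t • d ∈ s := hs.add_smul_sub_mem hx hy ⟨ht.1.le, ht.2.le⟩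
    have := calc
      ⟪gradient f (x + t • d) - gradient f x, d⟫_ℝ
          ≤ ‖gradient f (x + t • d) - gradient f x‖ * ‖d‖ := real_inner_le_norm _ _
      _ ≤ L * ‖t • d‖ * ‖d‖ := by gcongr; simpa using hlip _ hmem _ hx
      _ = L * t * ‖d‖ ^ 2 := by rw [norm_smul, Real.norm_of_nonneg ht.1.le]; ring
    linarith
  have hanti : AntitoneOn φ (Set.Icc 0 1) :=
    antitoneOn_of_hasDerivWithinAt_nonpos (convex_Icc 0 1)
      (HasDerivAt.continuousOn fun t _ => hφ' t) (fun t _ => (hφ' t).hasDerivWithinAt)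
      (by simpa using hφ'_nonpos)
  have h01 := hanti (Set.left_mem_Icc.2 zero_le_one) (Set.right_mem_Icc.2 zero_le_one) zero_le_one
  simp only [φ, d, zero_smul, add_zero, zero_mul, one_smul, add_sub_cancel, one_mul, one_pow,
    sub_zero, ne_eq, OfNat.ofNat_ne_zero, not_false_eq_true, zero_pow, mul_zero, mul_one] at h01
  linarith

end Descent

theorem convex_setOf_forall_nonneg {ι : Type*} :
    Convex ℝ {x : EuclideanSpace ℝ ι | ∀ i, 0 ≤ x i} :=
  fun _ hx _ hy _ _ ha hb _ i => add_nonneg (mul_nonneg ha (hx i)) (mul_nonneg hb (hy i))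

section Orthant

variable {ι : Type*} [Fintype ι] {f : EuclideanSpace ℝ ι → ℝ} {L : ℝ}
  {lstar lam : EuclideanSpace ℝ ι}

theorem sum_min_div_mul_gradient_le (hL : 0 < L) (hf : Differentiable ℝ f)
    (hlip : ∀ x : EuclideanSpace ℝ ι, (∀ i, 0 ≤ x i) → ∀ y : EuclideanSpace ℝ ι, (∀ i, 0 ≤ y i) →
      ‖gradient f x - gradient f y‖ ≤ L * ‖x - y‖)
    (hmin : ∀ μ : EuclideanSpace ℝ ι, (∀ i, 0 ≤ μ i) → f lstar ≤ f μ) (hlam : ∀ i, 0 ≤ lam i) :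
    ∑ i, min (lam i) (gradient f lam i / L) * gradient f lam i ≤ 2 * (f lam - f lstar) := by
  set g := gradient f lam
  let σ : EuclideanSpace ℝ ι := WithLp.toLp 2 fun i => min (lam i) (g i / L)
  have hstep : ∀ i, 0 ≤ (lam - σ) i := fun i => sub_nonneg.2 (min_le_left _ _)
  have hdesc := convex_setOf_forall_nonneg.le_add_inner_gradient_add_sq hf hlip hlam hstep
  have hinner : ⟪g, lam - σ - lam⟫_ℝ = -∑ i, σ i * g i := by
    simp [sub_sub_cancel_left, PiLp.inner_apply, mul_comm]
  have hnorm : ‖lam - σ - lam‖ ^ 2 = ∑ i, σ i ^ 2 := by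
    simp [sub_sub_cancel_left, EuclideanSpace.norm_sq_eq]
  have hquad : L * ∑ i, σ i ^ 2 ≤ ∑ i, σ i * g i := by
    rw [Finset.mul_sum]
    exact Finset.sum_le_sum fun i _ => mul_sq_min_div_le (hlam i) hL
  have := hmin _ hstep
  rw [hinner, hnorm] at hdesc
  change ∑ i, σ i * g i ≤ _
  linarith

theorem sum_mul_gradient_le (hL : 0 < L) (hf : Differentiable ℝ f)
    (hlip : ∀ x : EuclideanSpace ℝ ι, (∀ i, 0 ≤ x i) → ∀ y : EuclideanSpace ℝ ι, (∀ i, 0 ≤ y i) →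
      ‖gradient f x - gradient f y‖ ≤ L * ‖x - y‖)
    (hmin : ∀ μ : EuclideanSpace ℝ ι, (∀ i, 0 ≤ μ i) → f lstar ≤ f μ) (hlam : ∀ i, 0 ≤ lam i) :
    ∑ i, lam i * gradient f lam i ≤
      (∑ i, lam i) * √(2 * L * (f lam - f lstar)) + 2 * (f lam - f lstar) := by
  set g := gradient f lam
  set Δ := f lam - f lstar
  have hdec : ∑ i, min (lam i) (g i / L) * g i ≤ 2 * Δ :=
    sum_min_div_mul_gradient_le hL hf hlip hmin hlam
  have hΔ : 0 ≤ Δ := sub_nonneg.2 (hmin lam hlam)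
  have hterm : ∀ i, min (lam i) (g i / L) * g i ≤ 2 * Δ := fun i =>
    (Finset.single_le_sum (fun j _ => (by positivity : 0 ≤ L * _).trans
      (mul_sq_min_div_le (hlam j) hL)) (Finset.mem_univ i)).trans hdec
  calc ∑ i, lam i * g i
      ≤ ∑ i, (lam i * √(2 * L * Δ) + min (lam i) (g i / L) * g i) := by
        refine Finset.sum_le_sum fun i _ =>
          mul_le_mul_add_min_div_mul (hlam i) hL (Real.sqrt_nonneg _) ?_
        rw [Real.sq_sqrt (by positivity)]
        linarith [mul_le_mul_of_nonneg_left (hterm i) hL.le]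
    _ = (∑ i, lam i) * √(2 * L * Δ) + ∑ i, min (lam i) (g i / L) * g i := by
        rw [Finset.sum_add_distrib, Finset.sum_mul]
    _ ≤ (∑ i, lam i) * √(2 * L * Δ) + 2 * Δ := by gcongr

end Orthant

theorem stmt_6_general (m : ℕ) (hm : 1 ≤ m) (L : ℝ) (hL : 0 < L) (B : ℝ)
    (f : EuclideanSpace ℝ (Fin m) → ℝ) (hf : Differentiable ℝ f)
    (hlip : ∀ x : EuclideanSpace ℝ (Fin m), (∀ i, 0 ≤ x i) →
      ∀ y : EuclideanSpace ℝ (Fin m), (∀ i, 0 ≤ y i) →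
      ‖gradient f x - gradient f y‖ ≤ L * ‖x - y‖)
    (lstar : EuclideanSpace ℝ (Fin m))
    (hmin : ∀ μ : EuclideanSpace ℝ (Fin m), (∀ i, 0 ≤ μ i) → f lstar ≤ f μ)
    (lam : EuclideanSpace ℝ (Fin m)) (hlam : ∀ i, 0 ≤ lam i)
    (hlamB : ∑ i, |lam i| ≤ B) :
    ∑ i, lam i * gradient f lam i ≤
      B * Real.sqrt (2 * m * L * (f lam - f lstar)) + 2 * (f lam - f lstar) := by
  have hΔ : 0 ≤ f lam - f lstar := sub_nonneg.2 (hmin lam hlam)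
  have hsum : ∑ i, lam i ≤ B := by simpa only [abs_of_nonneg (hlam _)] using hlamB
  have hsqrt : √(2 * L * (f lam - f lstar)) ≤ √(2 * m * L * (f lam - f lstar)) := by
    have hm' : (1 : ℝ) ≤ m := by exact_mod_cast hm
    exact Real.sqrt_le_sqrt (by nlinarith [mul_nonneg hL.le hΔ])
  calc ∑ i, lam i * gradient f lam i
      ≤ (∑ i, lam i) * √(2 * L * (f lam - f lstar)) + 2 * (f lam - f lstar) :=
        sum_mul_gradient_le hL hf hlip hmin hlam
    _ ≤ (∑ i, lam i) * √(2 * m * L * (f lam - f lstar)) + 2 * (f lam - f lstar) := by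
        gcongr
        exact Finset.sum_nonneg fun i _ => hlam i
    _ ≤ B * √(2 * m * L * (f lam - f lstar)) + 2 * (f lam - f lstar) := by gcongr

theorem stmt_6 (m : ℕ) (hm : 1 ≤ m) (L : ℝ) (hL : 0 < L) (B : ℝ) (hB : 0 < B)
    (f : EuclideanSpace ℝ (Fin m) → ℝ) (hf : Differentiable ℝ f)
    (hlip : ∀ x : EuclideanSpace ℝ (Fin m), (∀ i, 0 ≤ x i) →
      ∀ y : EuclideanSpace ℝ (Fin m), (∀ i, 0 ≤ y i) →
      ‖gradient f x - gradient f y‖ ≤ L * ‖x - y‖)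
    (lstar : EuclideanSpace ℝ (Fin m)) (hstar : ∀ i, 0 ≤ lstar i)
    (hmin : ∀ μ : EuclideanSpace ℝ (Fin m), (∀ i, 0 ≤ μ i) → f lstar ≤ f μ)
    (lam : EuclideanSpace ℝ (Fin m)) (hlam : ∀ i, 0 ≤ lam i)
    (hlamB : ∑ i, |lam i| ≤ B) :
    ∑ i, lam i * gradient f lam i ≤
      B * Real.sqrt (2 * m * L * (f lam - f lstar)) + 2 * (f lam - f lstar) :=
  stmt_6_general m hm L hL B f hf hlip lstar hmin lam hlam hlamB
end

section
/- Let m ≥ 1 and L > 0, let f : ℝ^m → ℝ be differentiable with L-Lipschitz gradient on the nonnegative orthant ℝ^m_+, and let λ* ∈ ℝ^m_+ satisfy f(λ*) ≤ f(μ) for all μ ∈ ℝ^m_+. Fix λ ∈ ℝ^m_+, write a := ∇f(λ), and let J := {i : a_i ≥ 0 and λ_i ≥ a_i/L}. Then Σ_{i ∈ J} a_i² ≤ 2L·(f(λ) − f(λ*)). -/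
/-!
Take a gradient step of length `1 / L` from `λ`, but only in the coordinates of `J`: writing
`v` for `a` restricted to `J`, the definition of `J` keeps `μ := λ - v / L` in the orthant, and
`⟪a, v⟫ = ‖v‖² = ∑_{i ∈ J} a_i²`. The descent lemma for an `L`-Lipschitz gradient gives
`f μ ≤ f λ - ‖v‖² / (2L)`, and `f λ* ≤ f μ` finishes.
-/

open Set
open scoped InnerProductSpace

section Descent

variable {E : Type*} [NormedAddCommGroup E] [InnerProductSpace ℝ E] [CompleteSpace E]
  {f : E → ℝ} {s : Set E} {L : ℝ}

theorem hasDerivAt_comp_add_smul_of_differentiableAt {x v : E} {t : ℝ}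
    (hf : DifferentiableAt ℝ f (x + t • v)) :
    HasDerivAt (fun t : ℝ => f (x + t • v)) ⟪gradient f (x + t • v), v⟫_ℝ t := by
  have hline : HasDerivAt (fun t : ℝ => x + t • v) v t := by
    simpa using ((hasDerivAt_id t).smul_const v).const_add x
  exact (hasGradientAt_iff_hasFDerivAt.mp hf.hasGradientAt).comp_hasDerivAt t hline

theorem le_add_inner_gradient_add_of_lipschitz_gradient (hs : Convex ℝ s)
    (hf : ∀ x ∈ s, DifferentiableAt ℝ f x)
    (hlip : ∀ x ∈ s, ∀ y ∈ s, ‖gradient f x - gradient f y‖ ≤ L * ‖x - y‖)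
    {x y : E} (hx : x ∈ s) (hy : y ∈ s) :
    f y ≤ f x + ⟪gradient f x, y - x⟫_ℝ + L / 2 * ‖y - x‖ ^ 2 := by
  set v := y - x
  have hseg : ∀ t ∈ Icc (0 : ℝ) 1, x + t • v ∈ s := fun t ht => by
    simpa [v, sub_smul, one_smul] using hs.add_smul_sub_mem hx hy ht
  let g : ℝ → ℝ := fun t => f (x + t • v) - t * ⟪gradient f x, v⟫_ℝ - L / 2 * t ^ 2 * ‖v‖ ^ 2
  let g' : ℝ → ℝ := fun t => ⟪gradient f (x + t • v), v⟫_ℝ - ⟪gradient f x, v⟫_ℝ - L * t * ‖v‖ ^ 2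
  have hg : ∀ t ∈ Icc (0 : ℝ) 1, HasDerivAt g (g' t) t := fun t ht => by
    have hq : HasDerivAt (fun t : ℝ => L / 2 * t ^ 2 * ‖v‖ ^ 2) (L * t * ‖v‖ ^ 2) t := by
      refine (((hasDerivAt_pow 2 t).const_mul (L / 2)).mul_const (‖v‖ ^ 2)).congr_deriv ?_
      simp only [Nat.cast_ofNat, Nat.add_one_sub_one, pow_one]; ring
    exact ((hasDerivAt_comp_add_smul_of_differentiableAt (hf _ (hseg t ht))).sub
      ((hasDerivAt_id t).mul_const _)).sub hq |>.congr_deriv (by simp [g'])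
  have hg'_nonpos : ∀ t ∈ interior (Icc (0 : ℝ) 1), g' t ≤ 0 := fun t ht => by
    have ht := interior_subset ht
    have hgrad : ⟪gradient f (x + t • v) - gradient f x, v⟫_ℝ ≤ L * t * ‖v‖ * ‖v‖ :=
      calc ⟪gradient f (x + t • v) - gradient f x, v⟫_ℝ
          ≤ ‖gradient f (x + t • v) - gradient f x‖ * ‖v‖ := real_inner_le_norm _ _
        _ ≤ L * ‖(x + t • v) - x‖ * ‖v‖ := by
            gcongr; exact hlip _ (hseg t ht) _ hx
        _ = L * t * ‖v‖ * ‖v‖ := by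
            rw [add_sub_cancel_left, norm_smul, Real.norm_of_nonneg ht.1]; ring
    simp only [g', inner_sub_left] at hgrad ⊢
    nlinarith
  have hanti : AntitoneOn g (Icc 0 1) :=
    antitoneOn_of_hasDerivWithinAt_nonpos (convex_Icc 0 1)
      (fun t ht => (hg t ht).continuousAt.continuousWithinAt)
      (fun t ht => (hg t (interior_subset ht)).hasDerivWithinAt) hg'_nonpos
  have h01 := hanti (left_mem_Icc.mpr zero_le_one) (right_mem_Icc.mpr zero_le_one) zero_le_one
  simp only [g, v, zero_smul, add_zero, one_smul, add_sub_cancel] at h01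
  linarith

theorem apply_sub_inv_smul_le_of_lipschitz_gradient (hs : Convex ℝ s)
    (hf : ∀ x ∈ s, DifferentiableAt ℝ f x)
    (hlip : ∀ x ∈ s, ∀ y ∈ s, ‖gradient f x - gradient f y‖ ≤ L * ‖x - y‖) (hL : 0 < L)
    {x v : E} (hx : x ∈ s) (hxv : x - L⁻¹ • v ∈ s) (hv : ⟪gradient f x, v⟫_ℝ = ‖v‖ ^ 2) :
    f (x - L⁻¹ • v) ≤ f x - ‖v‖ ^ 2 / (2 * L) := by
  have h := le_add_inner_gradient_add_of_lipschitz_gradient hs hf hlip hx hxv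
  rw [sub_sub_cancel_left, inner_neg_right, real_inner_smul_right, hv, norm_neg, norm_smul,
    Real.norm_of_nonneg (inv_nonneg.mpr hL.le)] at h
  calc f (x - L⁻¹ • v) ≤ f x + -(L⁻¹ * ‖v‖ ^ 2) + L / 2 * (L⁻¹ * ‖v‖) ^ 2 := h
    _ = f x - ‖v‖ ^ 2 / (2 * L) := by field_simp; ring

end Descent

section Coordinates

variable {ι : Type*}

def nonnegOrthant (ι : Type*) : Set (EuclideanSpace ℝ ι) := {x | ∀ i, 0 ≤ x i}

theorem convex_nonnegOrthant : Convex ℝ (nonnegOrthant ι) := by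
  intro x hx y hy a b ha hb _ i
  simpa using add_nonneg (mul_nonneg ha (hx i)) (mul_nonneg hb (hy i))

variable [Fintype ι] [DecidableEq ι]

theorem inner_toLp_ite_mem_eq_sum_sq (a : EuclideanSpace ℝ ι) (J : Finset ι) :
    ⟪a, WithLp.toLp 2 (fun i => if i ∈ J then a i else 0)⟫_ℝ = ∑ i ∈ J, a i ^ 2 := by
  simp [PiLp.inner_apply, Finset.sum_ite_mem, sq]

theorem norm_toLp_ite_mem_sq (a : EuclideanSpace ℝ ι) (J : Finset ι) :
    ‖(WithLp.toLp 2 (fun i => if i ∈ J then a i else 0) : EuclideanSpace ℝ ι)‖ ^ 2 =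
      ∑ i ∈ J, a i ^ 2 := by
  simp [EuclideanSpace.norm_sq_eq, apply_ite, Finset.sum_ite_mem]

end Coordinates

theorem stmt_8_general (m : ℕ) (L : ℝ) (hL : 0 < L)
    (f : EuclideanSpace ℝ (Fin m) → ℝ) (hf : Differentiable ℝ f)
    (hlip : ∀ x : EuclideanSpace ℝ (Fin m), (∀ i, 0 ≤ x i) →
      ∀ y : EuclideanSpace ℝ (Fin m), (∀ i, 0 ≤ y i) →
      ‖gradient f x - gradient f y‖ ≤ L * ‖x - y‖)
    (lstar : EuclideanSpace ℝ (Fin m))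
    (hmin : ∀ μ : EuclideanSpace ℝ (Fin m), (∀ i, 0 ≤ μ i) → f lstar ≤ f μ)
    (lam : EuclideanSpace ℝ (Fin m)) (hlam : ∀ i, 0 ≤ lam i) :
    ∑ i ∈ Finset.univ.filter
        (fun i => 0 ≤ gradient f lam i ∧ gradient f lam i / L ≤ lam i),
      (gradient f lam i) ^ 2 ≤ 2 * L * (f lam - f lstar) := by
  set J := Finset.univ.filter (fun i => 0 ≤ gradient f lam i ∧ gradient f lam i / L ≤ lam i)
  set v : EuclideanSpace ℝ (Fin m) :=
    WithLp.toLp 2 (fun i => if i ∈ J then gradient f lam i else 0)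
  have hstep : lam - L⁻¹ • v ∈ nonnegOrthant (Fin m) := fun i => by
    by_cases hi : i ∈ J
    · have := (Finset.mem_filter.mp hi).2.2
      simp only [v, PiLp.sub_apply, PiLp.smul_apply, smul_eq_mul, if_pos hi]
      rw [← div_eq_inv_mul]
      linarith
    · simpa [v, hi] using hlam i
  have hdecrease := apply_sub_inv_smul_le_of_lipschitz_gradient convex_nonnegOrthant
    (fun x _ => hf x) hlip hL hlam hstep (by rw [inner_toLp_ite_mem_eq_sum_sq, norm_toLp_ite_mem_sq])
  rw [norm_toLp_ite_mem_sq] at hdecrease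
  have hgap := (hmin _ hstep).trans hdecrease
  rw [← div_le_iff₀' (by positivity)]
  linarith

theorem stmt_8 (m : ℕ) (hm : 1 ≤ m) (L : ℝ) (hL : 0 < L)
    (f : EuclideanSpace ℝ (Fin m) → ℝ) (hf : Differentiable ℝ f)
    (hlip : ∀ x : EuclideanSpace ℝ (Fin m), (∀ i, 0 ≤ x i) →
      ∀ y : EuclideanSpace ℝ (Fin m), (∀ i, 0 ≤ y i) →
      ‖gradient f x - gradient f y‖ ≤ L * ‖x - y‖)
    (lstar : EuclideanSpace ℝ (Fin m)) (hstar : ∀ i, 0 ≤ lstar i)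
    (hmin : ∀ μ : EuclideanSpace ℝ (Fin m), (∀ i, 0 ≤ μ i) → f lstar ≤ f μ)
    (lam : EuclideanSpace ℝ (Fin m)) (hlam : ∀ i, 0 ≤ lam i) :
    ∑ i ∈ Finset.univ.filter
        (fun i => 0 ≤ gradient f lam i ∧ gradient f lam i / L ≤ lam i),
      (gradient f lam i) ^ 2 ≤ 2 * L * (f lam - f lstar) :=
  stmt_8_general m L hL f hf hlip lstar hmin lam hlam
end
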